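/- Suppose $f, f', f'' : \mathbb{R} \to \mathbb{R}$ exist, are bounded and uniformly continuous on $\mathbb{R}$, and $f$ is integrable. Then $u(x,t) := E_t(f)(x) = \int_{-\infty}^{+\infty} f(x-v) \cdot \frac{t\, e^{-t|v|}}{2}\, dv$ solves the final value problem $\frac{\partial u}{\partial t}(x,t) = \frac{1}{t^2} \frac{\partial^3 u}{\partial x^2 \partial t}(x,t) - \frac{2}{t^3} \frac{\partial^2 u}{\partial x^2}(x,t)$ for all $t > 0$, $x \in \mathbb{R}$, together with $\lim_{s \to \infty} u(x,s) = f(x)$ for every $x \in \mathbb{R}$. -/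

import Mathlib

/-!
Write `u t x = E_t f x`. The kernel `t e^{-t|v|} / 2` satisfies `k'' = t² k` on each half line and
its derivative jumps by `-t²` at `0`, so integrating by parts twice on each half line gives
`∂ₓ² u = E_t f'' = t² (u - f)`. The equation is then the product rule for `∂ₜ (t² (u - f))`.
For the final value, the substitution `v = w / t` writes `u t x` as the average of `f (x ± w / t)`
against `e^{-w}` on the half line, which tends to `f x` by dominated convergence.
-/

open MeasureTheory Filter

/-- The exponential convolution operator. -/
noncomputable def expConv (f : ℝ → ℝ) (t x : ℝ) : ℝ :=
  ∫ v : ℝ, f (x - v) * (t * Real.exp (-t * |v|) / 2)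

open Set Real Topology

variable {g : ℝ → ℝ} {M t : ℝ}

lemma integrable_exp_neg_mul_abs (ht : 0 < t) :
    Integrable fun v : ℝ => exp (-t * |v|) := by
  set e := (Ici 0).indicator fun v : ℝ => exp (-t * v)
  have he : Integrable e := (integrable_indicator_iff measurableSet_Ici).2
    ((integrableOn_Ici_iff_integrableOn_Ioi).2 (exp_neg_integrableOn_Ioi 0 ht))
  have he₀ (v : ℝ) : 0 ≤ e v := indicator_nonneg (fun _ _ => (exp_pos _).le) v
  refine (he.add he.comp_neg).mono' (by fun_prop) (ae_of_all _ fun v => ?_)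
  rw [norm_of_nonneg (exp_pos _).le]
  rcases le_or_gt 0 v with hv | hv
  · exact le_add_of_le_of_nonneg (by simp [e, hv, abs_of_nonneg hv]) (he₀ _)
  · exact le_add_of_nonneg_of_le (he₀ _) (by simp [e, hv.le, abs_of_neg hv])

lemma integrable_expConv_integrand (hg : Measurable g) (hM : ∀ y, |g y| ≤ M) (ht : 0 < t)
    (x : ℝ) : Integrable fun v => g (x - v) * (t * exp (-t * |v|) / 2) :=
  ((integrable_exp_neg_mul_abs ht).const_mul t |>.div_const 2).bdd_mul
    (hg.comp (measurable_const_sub x)).aestronglyMeasurable (ae_of_all _ fun v => hM (x - v))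

lemma integral_eq_integral_Ioi_add_comp_neg {E : Type*} [NormedAddCommGroup E] [NormedSpace ℝ E]
    {f : ℝ → E} (hf : Integrable f) : ∫ v, f v = ∫ v in Ioi 0, (f v + f (-v)) := by
  rw [integral_add hf.integrableOn hf.comp_neg.integrableOn, integral_comp_neg_Ioi, neg_zero,
    add_comm, intervalIntegral.integral_Iic_add_Ioi hf.integrableOn hf.integrableOn]

lemma expConv_eq_integral_Ioi (hg : Measurable g) (hM : ∀ y, |g y| ≤ M) (ht : 0 < t) (x : ℝ) :
    expConv g t x = t / 2 * ∫ v in Ioi 0, (g (x + v) + g (x - v)) * exp (-t * v) := by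
  rw [expConv, integral_eq_integral_Ioi_add_comp_neg (integrable_expConv_integrand hg hM ht x),
    ← integral_const_mul]
  refine setIntegral_congr_fun measurableSet_Ioi fun v hv => ?_
  simp only [abs_neg, abs_of_pos (mem_Ioi.1 hv), sub_neg_eq_add]
  ring

lemma integrableOn_Ioi_bdd_mul_exp_neg {φ : ℝ → ℝ} (hφ : Measurable φ)
    (hM : ∀ v, |φ v| ≤ M) (ht : 0 < t) : IntegrableOn (fun v => φ v * exp (-t * v)) (Ioi 0) :=
  (exp_neg_integrableOn_Ioi 0 ht).bdd_mul hφ.aestronglyMeasurable (ae_of_all _ fun v => hM v)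

lemma tendsto_mul_exp_neg_atTop {φ : ℝ → ℝ} (hM : ∀ v, |φ v| ≤ M) (ht : 0 < t) :
    Tendsto (fun v => φ v * exp (-t * v)) atTop (𝓝 0) := by
  have hexp : Tendsto (fun v => exp (-t * v)) atTop (𝓝 0) :=
    tendsto_exp_atBot.comp (tendsto_id.const_mul_atTop_of_neg (neg_lt_zero.2 ht))
  simpa only [mul_comm] using
    hexp.zero_mul_isBoundedUnder_le (isBoundedUnder_of ⟨M, fun v => hM v⟩)

lemma integral_Ioi_mul_exp_neg_of_hasDerivAt {h h' h'' : ℝ → ℝ} {M₀ M₁ M₂ : ℝ}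
    (hh : ∀ v, HasDerivAt h (h' v) v) (hh' : ∀ v, HasDerivAt h' (h'' v) v)
    (hm : Measurable h'') (hM₀ : ∀ v, |h v| ≤ M₀) (hM₁ : ∀ v, |h' v| ≤ M₁)
    (hM₂ : ∀ v, |h'' v| ≤ M₂) (ht : 0 < t) :
    ∫ v in Ioi 0, h'' v * exp (-t * v) =
      t ^ 2 * (∫ v in Ioi 0, h v * exp (-t * v)) - (h' 0 + t * h 0) := by
  have hc : Continuous h := continuous_iff_continuousAt.2 fun v => (hh v).continuousAt
  have hint₀ := integrableOn_Ioi_bdd_mul_exp_neg hc.measurable hM₀ ht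
  have hint₂ := integrableOn_Ioi_bdd_mul_exp_neg hm hM₂ ht
  have hprim : ∀ v ∈ Ici (0 : ℝ), HasDerivAt (fun v => (h' v + t * h v) * exp (-t * v))
      (h'' v * exp (-t * v) - t ^ 2 * (h v * exp (-t * v))) v := fun v _ => by
    have he : HasDerivAt (fun v => exp (-t * v)) (exp (-t * v) * -t) v := by
      simpa using ((hasDerivAt_id v).const_mul (-t)).exp
    exact (((hh' v).fun_add ((hh v).const_mul t)).fun_mul he).congr_deriv (by ring)
  have hlim : Tendsto (fun v => (h' v + t * h v) * exp (-t * v)) atTop (𝓝 0) :=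
    tendsto_mul_exp_neg_atTop (M := M₁ + t * M₀) (fun v => (abs_add_le _ _).trans
      (add_le_add (hM₁ v) (by rw [abs_mul, abs_of_pos ht]; gcongr; exact hM₀ v))) ht
  have hibp := integral_Ioi_of_hasDerivAt_of_tendsto' hprim (hint₂.sub (hint₀.const_mul _)) hlim
  rw [integral_sub hint₂ (hint₀.const_mul _), integral_const_mul, mul_zero, exp_zero,
    mul_one] at hibp
  linarith

lemma expConv_deriv_deriv {M₀ M₁ M₂ : ℝ} (hg : Differentiable ℝ g)
    (hg' : Differentiable ℝ (deriv g)) (hM₀ : ∀ y, |g y| ≤ M₀) (hM₁ : ∀ y, |deriv g y| ≤ M₁)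
    (hM₂ : ∀ y, |deriv (deriv g) y| ≤ M₂) (ht : 0 < t) (x : ℝ) :
    expConv (deriv (deriv g)) t x = t ^ 2 * (expConv g t x - g x) := by
  have hshift {φ : ℝ → ℝ} (hφ : Differentiable ℝ φ) (v : ℝ) :
      HasDerivAt (fun v => φ (x + v)) (deriv φ (x + v)) v ∧
        HasDerivAt (fun v => φ (x - v)) (-deriv φ (x - v)) v :=
    ⟨(hφ _).hasDerivAt.comp_const_add x v, (hφ _).hasDerivAt.comp_const_sub x v⟩
  have hd₀ (v : ℝ) :=
    ((hshift hg v).1.fun_add (hshift hg v).2).congr_deriv (sub_eq_add_neg ..).symm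
  have hd₁ (v : ℝ) :=
    ((hshift hg' v).1.fun_sub (hshift hg' v).2).congr_deriv (sub_neg_eq_add ..)
  rw [expConv_eq_integral_Ioi (measurable_deriv _) hM₂ ht,
    expConv_eq_integral_Ioi hg.continuous.measurable hM₀ ht,
    integral_Ioi_mul_exp_neg_of_hasDerivAt hd₀ hd₁ (by fun_prop)
      (fun v => (abs_add_le _ _).trans (add_le_add (hM₀ _) (hM₀ _)))
      (fun v => (abs_sub _ _).trans (add_le_add (hM₁ _) (hM₁ _)))
      (fun v => (abs_add_le _ _).trans (add_le_add (hM₂ _) (hM₂ _))) ht]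
  simp only [sub_zero, add_zero, sub_self]
  ring

lemma hasDerivAt_expConv {M' : ℝ} (hg : Differentiable ℝ g) (hM : ∀ y, |g y| ≤ M)
    (hM' : ∀ y, |deriv g y| ≤ M') (ht : 0 < t) (x : ℝ) :
    HasDerivAt (expConv g t) (expConv (deriv g) t x) x :=
  (hasDerivAt_integral_of_dominated_loc_of_deriv_le univ_mem
    (Eventually.of_forall fun y =>
      (integrable_expConv_integrand hg.continuous.measurable hM ht y).aestronglyMeasurable)
    (integrable_expConv_integrand hg.continuous.measurable hM ht x)
    (integrable_expConv_integrand (measurable_deriv g) hM' ht x).aestronglyMeasurable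
    (bound := fun v => M' * (t * exp (-t * |v|) / 2))
    (ae_of_all _ fun v y _ => by
      rw [norm_mul, norm_of_nonneg (by positivity : 0 ≤ t * exp (-t * |v|) / 2)]
      gcongr
      exact hM' _)
    (((integrable_exp_neg_mul_abs ht).const_mul t |>.div_const 2).const_mul M')
    (ae_of_all _ fun v y _ => ((hg _).hasDerivAt.comp_sub_const y v).mul_const _)).2

lemma iteratedDeriv_two_expConv {M₀ M₁ M₂ : ℝ} (hg : Differentiable ℝ g)
    (hg' : Differentiable ℝ (deriv g)) (hM₀ : ∀ y, |g y| ≤ M₀) (hM₁ : ∀ y, |deriv g y| ≤ M₁)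
    (hM₂ : ∀ y, |deriv (deriv g) y| ≤ M₂) (ht : 0 < t) (x : ℝ) :
    iteratedDeriv 2 (expConv g t) x = t ^ 2 * (expConv g t x - g x) := by
  have hderiv : deriv (expConv g t) = expConv (deriv g) t :=
    funext fun y => (hasDerivAt_expConv hg hM₀ hM₁ ht y).deriv
  rw [iteratedDeriv_succ, iteratedDeriv_one, hderiv,
    (hasDerivAt_expConv hg' hM₁ hM₂ ht x).deriv, expConv_deriv_deriv hg hg' hM₀ hM₁ hM₂ ht]

lemma integrableOn_Ioi_id_mul_exp_neg {b : ℝ} (hb : 0 < b) :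
    IntegrableOn (fun v => v * exp (-b * v)) (Ioi 0) := by
  simpa using integrableOn_rpow_mul_exp_neg_mul_rpow (s := 1) (p := 1) (by norm_num) one_pos hb

lemma differentiableAt_integral_Ioi_mul_exp_neg {φ : ℝ → ℝ} (hφ : Measurable φ)
    (hM : ∀ v, |φ v| ≤ M) (ht : 0 < t) :
    DifferentiableAt ℝ (fun s => ∫ v in Ioi 0, φ v * exp (-s * v)) t := by
  refine (hasDerivAt_integral_of_dominated_loc_of_deriv_le (Metric.ball_mem_nhds t (half_pos ht))
    (μ := volume.restrict (Ioi 0)) (F := fun s v => φ v * exp (-s * v))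
    (F' := fun s v => φ v * (exp (-s * v) * -v))
    (bound := fun v => M * (v * exp (-(t / 2) * v)))
    (Eventually.of_forall fun s => (hφ.mul (by fun_prop)).aestronglyMeasurable)
    (integrableOn_Ioi_bdd_mul_exp_neg hφ hM ht) (hφ.mul (by fun_prop)).aestronglyMeasurable
    ((ae_restrict_iff' measurableSet_Ioi).2 (ae_of_all _ fun v hv s hs => ?_))
    ((integrableOn_Ioi_id_mul_exp_neg (half_pos ht)).const_mul M)
    (ae_of_all _ fun v s _ => ?_)).2.differentiableAt
  · have hv : 0 < v := hv
    have hs : t / 2 < s := by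
      rw [Metric.mem_ball, Real.dist_eq, abs_sub_lt_iff] at hs
      linarith
    rw [norm_mul, norm_mul, norm_neg, norm_of_nonneg (exp_pos _).le, norm_of_nonneg hv.le,
      mul_comm (exp _), norm_eq_abs]
    have hexp : exp (-s * v) ≤ exp (-(t / 2) * v) := exp_le_exp.2 (by nlinarith)
    exact mul_le_mul (hM v) (by gcongr) (by positivity) ((abs_nonneg _).trans (hM v))
  · simpa using ((hasDerivAt_id s).neg.mul_const v).exp.const_mul (φ v)

lemma differentiableAt_expConv_left (hg : Measurable g) (hM : ∀ y, |g y| ≤ M) (ht : 0 < t)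
    (x : ℝ) : DifferentiableAt ℝ (fun s => expConv g s x) t := by
  have heq : (fun s => expConv g s x) =ᶠ[𝓝 t]
      fun s => s / 2 * ∫ v in Ioi 0, (g (x + v) + g (x - v)) * exp (-s * v) := by
    filter_upwards [lt_mem_nhds ht] with s hs using expConv_eq_integral_Ioi hg hM hs x
  exact heq.differentiableAt_iff.2 ((differentiableAt_id.div_const 2).mul
    (differentiableAt_integral_Ioi_mul_exp_neg (by fun_prop)
      (fun v => (abs_add_le _ _).trans (add_le_add (hM _) (hM _))) ht))

lemma expConv_eq_integral_Ioi_exp_neg (hg : Measurable g) (hM : ∀ y, |g y| ≤ M) (ht : 0 < t)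
    (x : ℝ) :
    expConv g t x = (∫ w in Ioi 0, (g (x + w / t) + g (x - w / t)) * exp (-w)) / 2 := by
  have hscale := integral_comp_mul_left_Ioi
    (fun w => (g (x + w / t) + g (x - w / t)) * exp (-w)) 0 ht
  simp only [mul_zero, smul_eq_mul, mul_div_cancel_left₀ _ ht.ne', ← neg_mul] at hscale
  rw [expConv_eq_integral_Ioi hg hM ht, hscale]
  field_simp

lemma tendsto_expConv_atTop (hg : Continuous g) (hM : ∀ y, |g y| ≤ M) (x : ℝ) :
    Tendsto (fun s => expConv g s x) atTop (𝓝 (g x)) := by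
  have hlim : Tendsto (fun s => ∫ w in Ioi 0, (g (x + w / s) + g (x - w / s)) * exp (-w))
      atTop (𝓝 (∫ w in Ioi 0, (g x + g x) * exp (-w))) := by
    refine tendsto_integral_filter_of_dominated_convergence (fun w => 2 * M * exp (-w))
      (Eventually.of_forall fun s => by fun_prop) (Eventually.of_forall fun s =>
        ae_of_all _ fun w => ?_) ((integrableOn_exp_neg_Ioi 0).const_mul _)
      (ae_of_all _ fun w => ?_)
    · rw [norm_mul, norm_of_nonneg (exp_pos _).le, norm_eq_abs]
      gcongr
      linarith [abs_add_le (g (x + w / s)) (g (x - w / s)), hM (x + w / s), hM (x - w / s)]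
    · have hshift : Tendsto (fun s => w / s) atTop (𝓝 0) :=
        tendsto_const_nhds.div_atTop tendsto_id
      simpa using (((hg.tendsto _).comp (hshift.const_add x)).add
        ((hg.tendsto _).comp (hshift.const_sub x))).mul_const (exp (-w))
  rw [integral_const_mul, integral_exp_neg_Ioi_zero, mul_one, ← two_mul] at hlim
  refine (hlim.div_const 2).congr' ?_ |>.trans (by rw [mul_div_cancel_left₀ _ two_ne_zero])
  filter_upwards [eventually_gt_atTop 0] with s hs
  exact (expConv_eq_integral_Ioi_exp_neg hg.measurable hM hs x).symm

theorem exp_conv_fvp_general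
    (f : ℝ → ℝ)
    (hf_diff : ∀ i < 2, Differentiable ℝ (iteratedDeriv i f))
    (hf_bdd : ∀ i ≤ 2, ∃ M : ℝ, ∀ x : ℝ, |iteratedDeriv i f x| ≤ M) :
    (∀ t > (0 : ℝ), ∀ x : ℝ,
        deriv (fun s => expConv f s x) t =
          (1 / t ^ 2) * deriv (fun s => iteratedDeriv 2 (fun y => expConv f s y) x) t -
            (2 / t ^ 3) * iteratedDeriv 2 (fun y => expConv f t y) x) ∧
      (∀ x : ℝ, Tendsto (fun s : ℝ => expConv f s x) atTop (nhds (f x))) := by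
  have hf : Differentiable ℝ f := by simpa using hf_diff 0 (by norm_num)
  have hf' : Differentiable ℝ (deriv f) := by simpa using hf_diff 1 (by norm_num)
  obtain ⟨M₀, hM₀⟩ : ∃ M, ∀ y, |f y| ≤ M := by simpa using hf_bdd 0 (by norm_num)
  obtain ⟨M₁, hM₁⟩ : ∃ M, ∀ y, |deriv f y| ≤ M := by simpa using hf_bdd 1 (by norm_num)
  obtain ⟨M₂, hM₂⟩ : ∃ M, ∀ y, |deriv (deriv f) y| ≤ M := by
    simpa [iteratedDeriv_succ] using hf_bdd 2 le_rfl
  refine ⟨fun t ht x => ?_, fun x => tendsto_expConv_atTop hf.continuous hM₀ x⟩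
  have hxx : (fun s => iteratedDeriv 2 (fun y => expConv f s y) x) =ᶠ[𝓝 t]
      fun s => s ^ 2 * (expConv f s x - f x) := by
    filter_upwards [lt_mem_nhds ht] with s hs
    exact iteratedDeriv_two_expConv hf hf' hM₀ hM₁ hM₂ hs x
  have hu := (differentiableAt_expConv_left hf.continuous.measurable hM₀ ht x).hasDerivAt
  rw [hxx.deriv_eq, ((hasDerivAt_pow 2 t).fun_mul (hu.sub_const (f x))).deriv,
    iteratedDeriv_two_expConv hf hf' hM₀ hM₁ hM₂ ht x]
  field_simp
  ring

theorem exp_conv_fvp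
    (f : ℝ → ℝ)
    (hf_diff : ∀ i < 2, Differentiable ℝ (iteratedDeriv i f))
    (hf_bdd : ∀ i ≤ 2, ∃ M : ℝ, ∀ x : ℝ, |iteratedDeriv i f x| ≤ M)
    (hf_uc : ∀ i ≤ 2, UniformContinuous (iteratedDeriv i f))
    (hf_int : Integrable f) :
    (∀ t > (0 : ℝ), ∀ x : ℝ,
        deriv (fun s => expConv f s x) t =
          (1 / t ^ 2) * deriv (fun s => iteratedDeriv 2 (fun y => expConv f s y) x) t -
            (2 / t ^ 3) * iteratedDeriv 2 (fun y => expConv f t y) x) ∧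
      (∀ x : ℝ, Tendsto (fun s : ℝ => expConv f s x) atTop (nhds (f x))) :=
  exp_conv_fvp_general f hf_diff hf_bdd
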